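/- arXiv:1804.06946 — 5 statements merged into one kernel-verified Lean document; each statement's English description precedes it below -/
import Mathlib

section
/- Let n > k ≥ 1 be integers. Let λ = (λ_1, …, λ_k) be a weakly decreasing sequence of integers with n − k ≥ λ_1 and λ_k ≥ 0, and let μ = (μ_1, …, μ_{n−k}) be a weakly decreasing sequence of integers with k ≥ μ_1 and μ_{n−k} ≥ 0. Define the sequence α ∈ ℤ^n by α_i = (n − i + 1) − λ_{k−i+1} for 1 ≤ i ≤ k, and α_{k+j} = (n − k − j + 1) + μ_j for 1 ≤ j ≤ n − k (i.e., α = (n − λ_k, (n−1) − λ_{k−1}, …, (n−k+1) − λ_1, (n−k) + μ_1, (n−k−1) + μ_2, …, 1 + μ_{n−k})). Then the entries of α are pairwise distinct if and only if λ is the transpose of μ, i.e., λ_i = #{ j ∈ {1,…,n−k} : μ_j ≥ i } for every i = 1, …, k. -/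
private lemma kapranov_anti_aux (K : ℕ) (f : ℕ → ℤ)
    (h : ∀ i, 1 ≤ i → i < K → f (i + 1) ≤ f i) :
    ∀ i j, 1 ≤ i → i ≤ j → j ≤ K → f j ≤ f i := by
  intro i j hi hij hjK
  induction j, hij using Nat.le_induction with
  | base => exact le_refl _
  | succ j hij ih =>
    have h1 : f (j + 1) ≤ f j := h j (le_trans hi hij) (by omega)
    exact le_trans h1 (ih (by omega))

/-- Kapranov's combinatorial statement: for partitions `l` (with `k` parts, each at most
`n - k`) and `m` (with `n - k` parts, each at most `k`), the entries of the sequence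
`α = (n - l k, (n-1) - l (k-1), …, (n-k+1) - l 1, (n-k) + m 1, …, 1 + m (n-k))`
are pairwise distinct if and only if `l` is the transpose (conjugate) of `m`. -/
theorem kapranov_distinct_iff_transpose
    (n k : ℕ) (hk : 1 ≤ k) (hkn : k < n)
    (l m : ℕ → ℤ)
    (hl_dec : ∀ i, 1 ≤ i → i < k → l (i + 1) ≤ l i)
    (hl_top : l 1 ≤ (n : ℤ) - (k : ℤ))
    (hl_bot : 0 ≤ l k)
    (hm_dec : ∀ j, 1 ≤ j → j < n - k → m (j + 1) ≤ m j)
    (hm_top : m 1 ≤ (k : ℤ))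
    (hm_bot : 0 ≤ m (n - k))
    (α : ℕ → ℤ)
    (hα₁ : ∀ i, 1 ≤ i → i ≤ k → α i = ((n : ℤ) - (i : ℤ) + 1) - l (k - i + 1))
    (hα₂ : ∀ j, 1 ≤ j → j ≤ n - k →
      α (k + j) = ((n : ℤ) - (k : ℤ) - (j : ℤ) + 1) + m j) :
    (∀ i j, 1 ≤ i → i ≤ n → 1 ≤ j → j ≤ n → i ≠ j → α i ≠ α j) ↔
      (∀ i, 1 ≤ i → i ≤ k →
        l i = (((Finset.Icc 1 (n - k)).filter (fun j => (i : ℤ) ≤ m j)).card : ℤ)) := by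
  have hm_anti : ∀ j j', 1 ≤ j → j ≤ j' → j' ≤ n - k → m j' ≤ m j :=
    kapranov_anti_aux (n - k) m hm_dec
  have hl_anti : ∀ i i', 1 ≤ i → i ≤ i' → i' ≤ k → l i' ≤ l i :=
    kapranov_anti_aux k l hl_dec
  set M : ℕ → ℕ := fun t => ((Finset.Icc 1 (n - k)).filter (fun j => (t : ℤ) ≤ m j)).card
    with hM
  have hM_le : ∀ t, M t ≤ n - k := by
    intro t
    have := Finset.card_le_card
      (Finset.filter_subset (fun j => (t : ℤ) ≤ m j) (Finset.Icc 1 (n - k)))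
    rw [Nat.card_Icc] at this
    simp only [hM]
    omega
  have hM_anti : ∀ s t : ℕ, s ≤ t → M t ≤ M s := by
    intro s t hst
    apply Finset.card_le_card
    intro x hx
    simp only [Finset.mem_filter] at hx ⊢
    refine ⟨hx.1, le_trans ?_ hx.2⟩
    exact_mod_cast Nat.cast_le.mpr hst
  have key_ge : ∀ t j : ℕ, 1 ≤ j → j ≤ n - k → (t : ℤ) ≤ m j → j ≤ M t := by
    intro t j hj1 hj2 hmj
    have hsub : Finset.Icc 1 j ⊆ (Finset.Icc 1 (n - k)).filter (fun j' => (t : ℤ) ≤ m j') := by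
      intro x hx
      simp only [Finset.mem_Icc, Finset.mem_filter] at hx ⊢
      exact ⟨⟨hx.1, le_trans hx.2 hj2⟩, le_trans hmj (hm_anti x j hx.1 hx.2 hj2)⟩
    have := Finset.card_le_card hsub
    rw [Nat.card_Icc] at this
    simp only [hM]
    omega
  have key_lt : ∀ t j : ℕ, 1 ≤ j → j ≤ n - k → m j < (t : ℤ) → M t < j := by
    intro t j hj1 hj2 hmj
    have hsub : (Finset.Icc 1 (n - k)).filter (fun j' => (t : ℤ) ≤ m j') ⊆
        Finset.Icc 1 (j - 1) := by
      intro x hx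
      simp only [Finset.mem_Icc, Finset.mem_filter] at hx ⊢
      refine ⟨hx.1.1, ?_⟩
      by_contra hxj
      have hjx : j ≤ x := by omega
      have := hm_anti j x hj1 hjx hx.1.2
      have := hx.2
      linarith
    have := Finset.card_le_card hsub
    rw [Nat.card_Icc] at this
    simp only [hM]
    omega
  have key2 : ∀ t j : ℕ, 1 ≤ j → j ≤ n - k →
      ((n : ℤ) - k) + t - M t ≠ ((n : ℤ) - k - j + 1) + m j := by
    intro t j hj1 hj2
    by_cases hc : (t : ℤ) ≤ m j
    · have := key_ge t j hj1 hj2 hc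
      omega
    · have := key_lt t j hj1 hj2 (not_le.mp hc)
      omega
  -- value of α on the first block, expressed via conjugate index
  have hα₁c : ∀ i, 1 ≤ i → i ≤ k →
      α i = ((n : ℤ) - k) + ((k - i + 1 : ℕ) : ℤ) - l (k - i + 1) := by
    intro i hi1 hik
    rw [hα₁ i hi1 hik]
    have : ((k - i + 1 : ℕ) : ℤ) = (k : ℤ) - i + 1 := by omega
    rw [this]; ring
  constructor
  · -- distinct → l = conjugate of m
    intro hdist i hi1 hik
    have hBmem : ∀ j ∈ Finset.Icc 1 (n - k),
        ((n : ℤ) - k - j + 1) + m j ∈ Finset.Icc (1 : ℤ) n := by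
      intro j hj
      simp only [Finset.mem_Icc] at hj ⊢
      have h0 : 0 ≤ m j := le_trans hm_bot (hm_anti j (n - k) hj.1 hj.2 le_rfl)
      have h1 : m j ≤ k := le_trans (hm_anti 1 j le_rfl hj.1 hj.2) hm_top
      omega
    set Bimg : Finset ℤ :=
      (Finset.Icc 1 (n - k)).image (fun j => ((n : ℤ) - k - j + 1) + m j) with hBimg
    have hBimg_sub : Bimg ⊆ Finset.Icc (1 : ℤ) n := by
      intro x hx
      simp only [hBimg, Finset.mem_image] at hx
      obtain ⟨j, hj, rfl⟩ := hx
      exact hBmem j hj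
    have hBinj : Set.InjOn (fun j => ((n : ℤ) - k - j + 1) + m j)
        (Finset.Icc 1 (n - k)) := by
      intro a ha b hb hab
      simp only [Finset.coe_Icc, Set.mem_Icc] at ha hb
      simp only at hab
      rcases lt_trichotomy a b with h | h | h
      · have := hm_anti a b ha.1 (le_of_lt h) hb.2
        omega
      · exact h
      · have := hm_anti b a hb.1 (le_of_lt h) ha.2
        omega
    have hcardB : Bimg.card = n - k := by
      rw [hBimg, Finset.card_image_of_injOn hBinj, Nat.card_Icc]
      omega
    set S : Finset ℤ := Finset.Icc (1 : ℤ) n \ Bimg with hS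
    have hScard : S.card = k := by
      rw [hS, Finset.card_sdiff_of_subset hBimg_sub, hcardB, Int.card_Icc]
      omega
    -- the two strictly increasing enumerations of S
    have hf_mem : ∀ t : Fin k,
        ((n : ℤ) - k) + ((t : ℕ) + 1) - M ((t : ℕ) + 1) ∈ S := by
      intro t
      have ht := t.2
      have h1 := hM_le ((t : ℕ) + 1)
      simp only [hS, Finset.mem_sdiff, Finset.mem_Icc, hBimg, Finset.mem_image]
      constructor
      · omega
      · rintro ⟨j, hj, hjeq⟩
        have := key2 ((t : ℕ) + 1) j hj.1 hj.2
        apply this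
        omega
    have hg_mem : ∀ t : Fin k,
        ((n : ℤ) - k) + ((t : ℕ) + 1) - l ((t : ℕ) + 1) ∈ S := by
      intro t
      have ht := t.2
      have h0 : 0 ≤ l ((t : ℕ) + 1) :=
        le_trans hl_bot (hl_anti ((t : ℕ) + 1) k (by omega) (by omega) le_rfl)
      have h1 : l ((t : ℕ) + 1) ≤ (n : ℤ) - k :=
        le_trans (hl_anti 1 ((t : ℕ) + 1) le_rfl (by omega) (by omega)) hl_top
      simp only [hS, Finset.mem_sdiff, Finset.mem_Icc, hBimg, Finset.mem_image]
      constructor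
      · omega
      · rintro ⟨j, hj, hjeq⟩
        -- this value is α (k - t), image value is α (k + j); use hdist
        have hi1 : 1 ≤ k - (t : ℕ) := by omega
        have hik : k - (t : ℕ) ≤ k := by omega
        have hidx : k - (k - (t : ℕ)) + 1 = (t : ℕ) + 1 := by omega
        have hαi : α (k - (t : ℕ)) = ((n : ℤ) - k) + ((t : ℕ) + 1) - l ((t : ℕ) + 1) := by
          rw [hα₁ (k - (t : ℕ)) hi1 hik, hidx]
          have h2 : ((k - (t : ℕ) : ℕ) : ℤ) = (k : ℤ) - (t : ℕ) := by omega
          rw [h2]; ring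
        have hαj : α (k + j) = ((n : ℤ) - k - j + 1) + m j := hα₂ j hj.1 hj.2
        have hne : α (k - (t : ℕ)) ≠ α (k + j) :=
          hdist (k - (t : ℕ)) (k + j) hi1 (by omega) (by omega) (by omega) (by omega)
        apply hne
        rw [hαi, hαj]
        omega
    have hf_mono : StrictMono (fun t : Fin k =>
        ((n : ℤ) - k) + ((t : ℕ) + 1) - M ((t : ℕ) + 1)) := by
      intro a b hab
      have hab' : (a : ℕ) < (b : ℕ) := hab
      have := hM_anti ((a : ℕ) + 1) ((b : ℕ) + 1) (by omega)
      simp only [Fin.val_fin_lt] at *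
      omega
    have hg_mono : StrictMono (fun t : Fin k =>
        ((n : ℤ) - k) + ((t : ℕ) + 1) - l ((t : ℕ) + 1)) := by
      intro a b hab
      have hab' : (a : ℕ) < (b : ℕ) := hab
      have hbk := b.2
      have := hl_anti ((a : ℕ) + 1) ((b : ℕ) + 1) (by omega) (by omega) (by omega)
      simp only [Fin.val_fin_lt] at *
      omega
    have hfix := Finset.orderEmbOfFin_unique hScard hf_mem hf_mono
    have hgix := Finset.orderEmbOfFin_unique hScard hg_mem hg_mono
    have heq : ∀ t : Fin k,
        ((n : ℤ) - k) + ((t : ℕ) + 1) - M ((t : ℕ) + 1)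
          = ((n : ℤ) - k) + ((t : ℕ) + 1) - l ((t : ℕ) + 1) :=
      fun t => (congrFun hfix t).trans (congrFun hgix t).symm
    have := heq ⟨i - 1, by omega⟩
    simp only at this
    have hi' : i - 1 + 1 = i := by omega
    rw [hi'] at this
    show l i = ((M i : ℕ) : ℤ)
    omega
  · -- l = conjugate of m → distinct
    intro hl i j hi1 hin hj1 hjn hij
    have hα₁M : ∀ i, 1 ≤ i → i ≤ k →
        α i = ((n : ℤ) - k) + ((k - i + 1 : ℕ) : ℤ) - M (k - i + 1) := by
      intro i hi1 hik
      rw [hα₁c i hi1 hik, hl (k - i + 1) (by omega) (by omega)]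
    rcases le_or_gt i k with hik | hik <;> rcases le_or_gt j k with hjk | hjk
    · -- both in first block
      intro heq
      rw [hα₁M i hi1 hik, hα₁M j hj1 hjk] at heq
      rcases lt_trichotomy i j with h | h | h
      · have := hM_anti (k - j + 1) (k - i + 1) (by omega)
        omega
      · exact hij h
      · have := hM_anti (k - i + 1) (k - j + 1) (by omega)
        omega
    · -- i in first block, j in second
      have hj' : j = k + (j - k) := by omega
      rw [hα₁M i hi1 hik, hj', hα₂ (j - k) (by omega) (by omega)]
      have := key2 (k - i + 1) (j - k) (by omega) (by omega)
      intro heq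
      exact this heq
    · -- j in first block, i in second
      have hi' : i = k + (i - k) := by omega
      rw [hα₁M j hj1 hjk, hi', hα₂ (i - k) (by omega) (by omega)]
      have := key2 (k - j + 1) (i - k) (by omega) (by omega)
      intro heq
      exact this heq.symm
    · -- both in second block
      have hi' : i = k + (i - k) := by omega
      have hj' : j = k + (j - k) := by omega
      rw [hi', hα₂ (i - k) (by omega) (by omega), hj', hα₂ (j - k) (by omega) (by omega)]
      rcases lt_trichotomy i j with h | h | h
      · have := hm_anti (i - k) (j - k) (by omega) (by omega) (by omega)
        intro heq
        omega
      · exact absurd h hij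
      · have := hm_anti (j - k) (i - k) (by omega) (by omega) (by omega)
        intro heq
        omega
end

section
/- Let p, q ≥ 1 be integers. Let λ = (λ_1, …, λ_p) be a weakly decreasing sequence of integers with q ≥ λ_1 and λ_p ≥ 0, and let μ = (μ_1, …, μ_q) be a weakly decreasing sequence of integers with p ≥ μ_1 and μ_q ≥ 0. Suppose λ is not the transpose of μ, i.e., it is not the case that λ_i = #{ j ∈ {1,…,q} : μ_j ≥ i } for all i = 1, …, p. Then the sequence β ∈ ℤ^{p+q} defined by β_i = (p − i + 1) − λ_{p−i+1} for 1 ≤ i ≤ p and β_{p+j} = μ_j − (j − 1) for 1 ≤ j ≤ q (i.e., β = (p − λ_p, (p−1) − λ_{p−1}, …, 1 − λ_1, μ_1, μ_2 − 1, …, μ_q − q + 1)) has at least two equal entries. -/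
/-!
The entries of `β` are the numbers `i - l i` (`1 ≤ i ≤ p`), strictly increasing in `i`, and
`m j - j + 1` (`1 ≤ j ≤ q`), strictly decreasing in `j`, all in the interval `[1 - q, p]` of
size `p + q`. Were they pairwise distinct, they would partition this interval. Counting the
interval above `i - l i` then shows that exactly `l i` entries of the second kind exceed it;
counting below `m j - j + 1` shows that the entries of the first kind below it are exactly those
with `i ≤ m j`. Together, `l i = #{j | i ≤ m j}`: `l` is the transpose of `m`.
-/

open Finset

theorem card_filter_add_card_filter_of_disjoint_image {ι α : Type*} [DecidableEq α]
    {s t : Finset ι} {a b : ι → α} (ha : Set.InjOn a s) (hb : Set.InjOn b t)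
    (hdisj : Disjoint (s.image a) (t.image b)) (P : α → Prop) [DecidablePred P] :
    #{i ∈ s | P (a i)} + #{j ∈ t | P (b j)} = #{x ∈ s.image a ∪ t.image b | P x} := by
  rw [filter_union, card_union_of_disjoint (disjoint_filter_filter hdisj), filter_image,
    filter_image, card_image_of_injOn (ha.mono (filter_subset _ _)),
    card_image_of_injOn (hb.mono (filter_subset _ _))]

section Rank

variable {α : Type*} [LinearOrder α] {n i : ℕ}

theorem StrictMonoOn.card_filter_apply_lt {a : ℕ → α} (ha : StrictMonoOn a (Set.Icc 1 n))
    (hi : i ∈ Set.Icc 1 n) : #{k ∈ Icc 1 n | a i < a k} = n - i := by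
  have : {k ∈ Icc 1 n | a i < a k} = Ioc i n := by
    ext k
    simp only [mem_filter, mem_Icc, mem_Ioc]
    constructor
    · rintro ⟨hk, hik⟩
      exact ⟨(ha.lt_iff_lt hi hk).1 hik, hk.2⟩
    · rintro ⟨hik, hkn⟩
      have hk : k ∈ Set.Icc 1 n := ⟨hi.1.trans hik.le, hkn⟩
      exact ⟨hk, ha hi hk hik⟩
  rw [this, Nat.card_Ioc]

theorem StrictAntiOn.card_filter_lt_apply {b : ℕ → α} (hb : StrictAntiOn b (Set.Icc 1 n))
    (hi : i ∈ Set.Icc 1 n) : #{k ∈ Icc 1 n | b k < b i} = n - i :=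
  hb.dual_right.card_filter_apply_lt hi

theorem MonotoneOn.lt_iff_le_card_filter_lt {a : ℕ → α} (ha : MonotoneOn a (Set.Icc 1 n))
    (hi : i ∈ Set.Icc 1 n) (y : α) : a i < y ↔ i ≤ #{k ∈ Icc 1 n | a k < y} := by
  constructor
  · intro hy
    calc i = #(Icc 1 i) := by simp
      _ ≤ _ := card_le_card fun k hk => by
        simp only [mem_Icc, mem_filter] at hk ⊢
        have hk' : k ∈ Set.Icc 1 n := ⟨hk.1, hk.2.trans hi.2⟩
        exact ⟨hk', (ha hk' hi hk.2).trans_lt hy⟩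
  · contrapose!
    intro hy
    calc #{k ∈ Icc 1 n | a k < y} ≤ #(Icc 1 (i - 1)) := card_le_card fun k hk => by
          simp only [mem_Icc, mem_filter] at hk ⊢
          by_contra! hik
          exact (hy.trans (ha hi hk.1 (by omega))).not_gt hk.2
      _ < i := by rw [Nat.card_Icc]; have := hi.1; omega

end Rank

def transpose (m : ℕ → ℤ) (q i : ℕ) : ℤ := #{j ∈ Icc 1 q | (i : ℤ) ≤ m j}

/-- `β (p + 1 - i) = lowerEntry l i` for `1 ≤ i ≤ p`. -/
def lowerEntry (l : ℕ → ℤ) (i : ℕ) : ℤ := i - l i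

/-- `β (p + j) = upperEntry m j` for `1 ≤ j ≤ q`. -/
def upperEntry (m : ℕ → ℤ) (j : ℕ) : ℤ := m j - j + 1

section Entries

variable {p q : ℕ} {l m : ℕ → ℤ}

theorem AntitoneOn.strictMonoOn_lowerEntry {s : Set ℕ} (hl : AntitoneOn l s) :
    StrictMonoOn (lowerEntry l) s := fun i hi k hk hik => by
  have := hl hi hk hik.le
  unfold lowerEntry
  omega

theorem AntitoneOn.strictAntiOn_upperEntry {s : Set ℕ} (hm : AntitoneOn m s) :
    StrictAntiOn (upperEntry m) s := fun j hj k hk hjk => by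
  have := hm hj hk hjk.le
  unfold upperEntry
  omega

theorem lowerEntry_mem_Icc (hl : AntitoneOn l (Set.Icc 1 p)) (hl_top : l 1 ≤ q)
    (hl_bot : 0 ≤ l p) {i : ℕ} (hi : i ∈ Set.Icc 1 p) :
    lowerEntry l i ∈ Icc (1 - q : ℤ) p := by
  have ⟨hi₁, hi₂⟩ := hi
  have := hl ⟨le_rfl, hi₁.trans hi₂⟩ hi hi₁
  have := hl hi ⟨hi₁.trans hi₂, le_rfl⟩ hi₂
  rw [mem_Icc, lowerEntry]
  omega

theorem upperEntry_mem_Icc (hm : AntitoneOn m (Set.Icc 1 q)) (hm_top : m 1 ≤ p)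
    (hm_bot : 0 ≤ m q) {j : ℕ} (hj : j ∈ Set.Icc 1 q) :
    upperEntry m j ∈ Icc (1 - q : ℤ) p := by
  have ⟨hj₁, hj₂⟩ := hj
  have := hm ⟨le_rfl, hj₁.trans hj₂⟩ hj hj₁
  have := hm hj ⟨hj₁.trans hj₂, le_rfl⟩ hj₂
  rw [mem_Icc, upperEntry]
  omega

theorem image_union_image_eq_Icc
    (hl : AntitoneOn l (Set.Icc 1 p)) (hm : AntitoneOn m (Set.Icc 1 q))
    (hl_top : l 1 ≤ q) (hl_bot : 0 ≤ l p) (hm_top : m 1 ≤ p) (hm_bot : 0 ≤ m q)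
    (hdisj : Disjoint ((Icc 1 p).image (lowerEntry l)) ((Icc 1 q).image (upperEntry m))) :
    (Icc 1 p).image (lowerEntry l) ∪ (Icc 1 q).image (upperEntry m) = Icc (1 - q : ℤ) p := by
  refine eq_of_subset_of_card_le (union_subset ?_ ?_) ?_
  · exact image_subset_iff.2 fun i hi => lowerEntry_mem_Icc hl hl_top hl_bot (mem_Icc.1 hi)
  · exact image_subset_iff.2 fun j hj => upperEntry_mem_Icc hm hm_top hm_bot (mem_Icc.1 hj)
  · rw [card_union_of_disjoint hdisj,
      card_image_of_injOn (by simpa using hl.strictMonoOn_lowerEntry.injOn),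
      card_image_of_injOn (by simpa using hm.strictAntiOn_upperEntry.injOn), Int.card_Icc]
    simp

theorem card_filter_lt_upperEntry
    (hl : AntitoneOn l (Set.Icc 1 p)) (hm : AntitoneOn m (Set.Icc 1 q))
    (hdisj : Disjoint ((Icc 1 p).image (lowerEntry l)) ((Icc 1 q).image (upperEntry m)))
    (hunion :
      (Icc 1 p).image (lowerEntry l) ∪ (Icc 1 q).image (upperEntry m) = Icc (1 - q : ℤ) p)
    {j : ℕ} (hj : j ∈ Set.Icc 1 q) :
    (#{k ∈ Icc 1 p | lowerEntry l k < upperEntry m j} : ℤ) = m j := by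
  have hb := hm.strictAntiOn_upperEntry
  have hc : upperEntry m j ∈ Icc (1 - q : ℤ) p :=
    hunion ▸ mem_union_right _ (mem_image_of_mem _ (mem_Icc.2 hj))
  rw [mem_Icc] at hc
  have hbelow : {x ∈ Icc (1 - q : ℤ) p | x < upperEntry m j} =
      Ico (1 - q : ℤ) (upperEntry m j) := by
    ext x
    simp only [mem_filter, mem_Icc, mem_Ico]
    omega
  have h := card_filter_add_card_filter_of_disjoint_image (by simpa using
    hl.strictMonoOn_lowerEntry.injOn) (by simpa using hb.injOn) hdisj (· < upperEntry m j)
  rw [hunion, hb.card_filter_lt_apply hj, hbelow, Int.card_Ico] at h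
  have := hj.2
  have : upperEntry m j = m j - j + 1 := rfl
  omega

theorem card_filter_lowerEntry_lt
    (hl : AntitoneOn l (Set.Icc 1 p)) (hm : AntitoneOn m (Set.Icc 1 q))
    (hdisj : Disjoint ((Icc 1 p).image (lowerEntry l)) ((Icc 1 q).image (upperEntry m)))
    (hunion :
      (Icc 1 p).image (lowerEntry l) ∪ (Icc 1 q).image (upperEntry m) = Icc (1 - q : ℤ) p)
    {i : ℕ} (hi : i ∈ Set.Icc 1 p) :
    (#{j ∈ Icc 1 q | lowerEntry l i < upperEntry m j} : ℤ) = l i := by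
  have ha := hl.strictMonoOn_lowerEntry
  have hc : lowerEntry l i ∈ Icc (1 - q : ℤ) p :=
    hunion ▸ mem_union_left _ (mem_image_of_mem _ (mem_Icc.2 hi))
  rw [mem_Icc] at hc
  have habove : {x ∈ Icc (1 - q : ℤ) p | lowerEntry l i < x} = Ioc (lowerEntry l i) p := by
    ext x
    simp only [mem_filter, mem_Icc, mem_Ioc]
    omega
  have h := card_filter_add_card_filter_of_disjoint_image (by simpa using ha.injOn)
    (by simpa using hm.strictAntiOn_upperEntry.injOn) hdisj (lowerEntry l i < ·)
  rw [hunion, ha.card_filter_apply_lt hi, habove, Int.card_Ioc] at h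
  have := hi.2
  have : lowerEntry l i = i - l i := rfl
  omega

theorem eq_transpose_of_image_union_image_eq_Icc
    (hl : AntitoneOn l (Set.Icc 1 p)) (hm : AntitoneOn m (Set.Icc 1 q))
    (hdisj : Disjoint ((Icc 1 p).image (lowerEntry l)) ((Icc 1 q).image (upperEntry m)))
    (hunion :
      (Icc 1 p).image (lowerEntry l) ∪ (Icc 1 q).image (upperEntry m) = Icc (1 - q : ℤ) p)
    {i : ℕ} (hi : i ∈ Set.Icc 1 p) : l i = transpose m q i := by
  rw [transpose, ← card_filter_lowerEntry_lt hl hm hdisj hunion hi]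
  congr 2
  refine filter_congr fun j hj => ?_
  rw [hl.strictMonoOn_lowerEntry.monotoneOn.lt_iff_le_card_filter_lt hi, ← Int.ofNat_le,
    card_filter_lt_upperEntry hl hm hdisj hunion (mem_Icc.1 hj)]

end Entries

theorem bbw_vanishing_two_equal_entries_general
    (p q : ℕ)
    (l m : ℕ → ℤ)
    (hl_dec : ∀ i, 1 ≤ i → i < p → l (i + 1) ≤ l i)
    (hl_top : l 1 ≤ (q : ℤ))
    (hl_bot : 0 ≤ l p)
    (hm_dec : ∀ j, 1 ≤ j → j < q → m (j + 1) ≤ m j)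
    (hm_top : m 1 ≤ (p : ℤ))
    (hm_bot : 0 ≤ m q)
    (hne : ¬ (∀ i, 1 ≤ i → i ≤ p →
      l i = (((Finset.Icc 1 q).filter (fun j => (i : ℤ) ≤ m j)).card : ℤ)))
    (β : ℕ → ℤ)
    (hβ₁ : ∀ i, 1 ≤ i → i ≤ p → β i = ((p : ℤ) - (i : ℤ) + 1) - l (p - i + 1))
    (hβ₂ : ∀ j, 1 ≤ j → j ≤ q → β (p + j) = m j - ((j : ℤ) - 1)) :
    ∃ i j, 1 ≤ i ∧ i ≤ p + q ∧ 1 ≤ j ∧ j ≤ p + q ∧ i ≠ j ∧ β i = β j := by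
  by_contra! hcon
  have hl : AntitoneOn l (Set.Icc 1 p) :=
    antitoneOn_of_add_one_le Set.ordConnected_Icc fun i _ hi hi' => hl_dec i hi.1 hi'.2
  have hm : AntitoneOn m (Set.Icc 1 q) :=
    antitoneOn_of_add_one_le Set.ordConnected_Icc fun j _ hj hj' => hm_dec j hj.1 hj'.2
  have hdisj : Disjoint ((Icc 1 p).image (lowerEntry l)) ((Icc 1 q).image (upperEntry m)) := by
    simp only [disjoint_left, mem_image, mem_Icc, not_exists, not_and]
    rintro _ ⟨i, hi, rfl⟩ j hj hji
    refine hcon (p + 1 - i) (p + j) (by omega) (by omega) (by omega) (by omega) (by omega) ?_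
    have h₁ := hβ₁ (p + 1 - i) (by omega) (by omega)
    rw [show p - (p + 1 - i) + 1 = i by omega] at h₁
    rw [h₁, hβ₂ j hj.1 hj.2]
    unfold lowerEntry upperEntry at hji
    omega
  exact hne fun i hi₁ hi₂ => eq_transpose_of_image_union_image_eq_Icc hl hm hdisj
    (image_union_image_eq_Icc hl hm hl_top hl_bot hm_top hm_bot hdisj) ⟨hi₁, hi₂⟩

/-- Borel–Bott–Weil vanishing criterion (combinatorial core): if the partition `l`
(with `p` parts, each at most `q`) is not the transpose of the partition `m` (with `q`
parts, each at most `p`), then the sequence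
`β = (p - l p, (p-1) - l (p-1), …, 1 - l 1, m 1, m 2 - 1, …, m q - q + 1)`
has at least two equal entries. -/
theorem bbw_vanishing_two_equal_entries
    (p q : ℕ) (hp : 1 ≤ p) (hq : 1 ≤ q)
    (l m : ℕ → ℤ)
    (hl_dec : ∀ i, 1 ≤ i → i < p → l (i + 1) ≤ l i)
    (hl_top : l 1 ≤ (q : ℤ))
    (hl_bot : 0 ≤ l p)
    (hm_dec : ∀ j, 1 ≤ j → j < q → m (j + 1) ≤ m j)
    (hm_top : m 1 ≤ (p : ℤ))
    (hm_bot : 0 ≤ m q)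
    (hne : ¬ (∀ i, 1 ≤ i → i ≤ p →
      l i = (((Finset.Icc 1 q).filter (fun j => (i : ℤ) ≤ m j)).card : ℤ)))
    (β : ℕ → ℤ)
    (hβ₁ : ∀ i, 1 ≤ i → i ≤ p → β i = ((p : ℤ) - (i : ℤ) + 1) - l (p - i + 1))
    (hβ₂ : ∀ j, 1 ≤ j → j ≤ q → β (p + j) = m j - ((j : ℤ) - 1)) :
    ∃ i j, 1 ≤ i ∧ i ≤ p + q ∧ 1 ≤ j ∧ j ≤ p + q ∧ i ≠ j ∧ β i = β j :=
  bbw_vanishing_two_equal_entries_general p q l m hl_dec hl_top hl_bot hm_dec hm_top hm_bot hne β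
    hβ₁ hβ₂
end

section
/- Let n ≥ 1 be an integer and let λ = (λ_1, …, λ_n) be a weakly decreasing sequence of integers such that (i) λ_n ≤ −1, (ii) λ_1 ≥ −(n + 2), and (iii) λ_i − λ_{i+1} ≤ 3 for all i = 1, …, n − 1. Define γ ∈ ℤ^{n+1} by γ_i = (n + 2 − i) + λ_i for 1 ≤ i ≤ n and γ_{n+1} = 1 (i.e., γ = (n + 1 + λ_1, n + λ_2, …, 2 + λ_n, 1)). Then it is NOT the case that all entries γ_i are nonzero and the absolute values |γ_1|, |γ_2|, …, |γ_{n+1}| are pairwise distinct; that is, either some γ_i = 0 or there exist indices i ≠ j with |γ_i| = |γ_j|. -/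
/-- Combinatorial core of Lemma 4.1: for a weakly decreasing integer sequence `l` with
`l n ≤ -1`, `l 1 ≥ -(n+2)` and gaps `l i - l (i+1) ≤ 3`, the sequence
`γ = (n + 1 + l 1, n + l 2, …, 2 + l n, 1)` cannot have all entries nonzero with
pairwise distinct absolute values: either some entry vanishes or two entries have
equal absolute values. -/
theorem igr_even_vanishing_core
    (n : ℕ) (hn : 1 ≤ n)
    (l : ℕ → ℤ)
    (hl_dec : ∀ i, 1 ≤ i → i < n → l (i + 1) ≤ l i)
    (h₁ : l n ≤ -1)
    (h₂ : -((n : ℤ) + 2) ≤ l 1)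
    (h₃ : ∀ i, 1 ≤ i → i < n → l i - l (i + 1) ≤ 3)
    (γ : ℕ → ℤ)
    (hγ₁ : ∀ i, 1 ≤ i → i ≤ n → γ i = ((n : ℤ) + 2 - (i : ℤ)) + l i)
    (hγ₂ : γ (n + 1) = 1) :
    (∃ i, 1 ≤ i ∧ i ≤ n + 1 ∧ γ i = 0) ∨
      (∃ i j, 1 ≤ i ∧ i ≤ n + 1 ∧ 1 ≤ j ∧ j ≤ n + 1 ∧ i ≠ j ∧ |γ i| = |γ j|) := by
  by_contra hcon
  push_neg at hcon
  obtain ⟨h0, hd⟩ := hcon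
  -- distinct absolute values, rephrased without abs
  have hne : ∀ i j, 1 ≤ i → i ≤ n + 1 → 1 ≤ j → j ≤ n + 1 → i ≠ j →
      γ i ≠ γ j ∧ γ i ≠ -γ j := by
    intro i j hi1 hi2 hj1 hj2 hij
    have h := hd i j hi1 hi2 hj1 hj2 hij
    constructor
    · intro he; exact h (abs_eq_abs.mpr (Or.inl he))
    · intro he; exact h (abs_eq_abs.mpr (Or.inr he))
  -- step bounds
  have hstep : ∀ i, 1 ≤ i → i < n → γ (i + 1) + 1 ≤ γ i ∧ γ i ≤ γ (i + 1) + 4 := by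
    intro i hi1 hi2
    have e1 := hγ₁ i hi1 (le_of_lt hi2)
    have e2 := hγ₁ (i + 1) (by omega) (by omega)
    have d1 := hl_dec i hi1 hi2
    have d2 := h₃ i hi1 hi2
    push_cast at e1 e2
    omega
  -- γ n ≤ -2
  have hgn_eq := hγ₁ n hn le_rfl
  have hgn_ne := hne n (n + 1) hn (by omega) (by omega) le_rfl (by omega)
  have hgn0 := h0 n hn (by omega)
  rw [hγ₂] at hgn_ne
  have hgn : γ n ≤ -2 := by omega
  -- γ 1 ≥ 2
  have hg1_eq := hγ₁ 1 le_rfl hn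
  have hg1_ne := hne 1 (n + 1) le_rfl (by omega) (by omega) le_rfl (by omega)
  have hg10 := h0 1 le_rfl (by omega)
  rw [hγ₂] at hg1_ne
  have hg1 : 2 ≤ γ 1 := by push_cast at hg1_eq; omega
  -- find the crossing index
  have key : ∀ k, 1 ≤ k → k ≤ n →
      2 ≤ γ k ∨ ∃ i, 1 ≤ i ∧ i < n ∧ 2 ≤ γ i ∧ γ (i + 1) ≤ 1 := by
    intro k
    induction k with
    | zero => omega
    | succ m ih =>
      intro hk1 hk2
      by_cases hm : 1 ≤ m
      · rcases ih hm (by omega) with h | h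
        · by_cases hg : 2 ≤ γ (m + 1)
          · exact Or.inl hg
          · exact Or.inr ⟨m, hm, by omega, h, by omega⟩
        · exact Or.inr h
      · have : m = 0 := by omega
        subst this
        exact Or.inl hg1
  rcases key n hn le_rfl with h | ⟨i, hi1, hi2, hgi, hgi1⟩
  · omega
  · have hs := hstep i hi1 hi2
    have hne1 := hne (i + 1) (n + 1) (by omega) (by omega) (by omega) le_rfl (by omega)
    have h01 := h0 (i + 1) (by omega) (by omega)
    rw [hγ₂] at hne1
    have hgm2 : γ (i + 1) = -2 := by omega
    have hgi2 : γ i = 2 := by omega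
    have := hne i (i + 1) hi1 (by omega) (by omega) (by omega) (by omega)
    omega
end

section
/- Let n ≥ 1 be an integer and let λ = (λ_1, …, λ_n) be a weakly decreasing sequence of integers such that λ_n ≤ −1, λ_1 ≥ −(n + 1), and λ_i − λ_{i+1} ≤ 2 for all i = 1, …, n − 1. Let α = (α_1, …, α_n) be any weakly decreasing sequence of integers satisfying λ_i − 1 ≤ α_i ≤ λ_i for all i = 1, …, n, and define γ ∈ ℤ^{n+1} by γ_i = (n + 2 − i) + α_i for 1 ≤ i ≤ n and γ_{n+1} = 1. Then either some entry γ_i equals 0, or there exist indices i ≠ j with |γ_i| = |γ_j|. -/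
/-- Discrete intermediate value: a sign change must occur at some step. -/
lemma igr_ivt_aux (f : ℕ → ℤ) (n : ℕ) (hn : 1 ≤ n) (h1 : 0 < f 1) (h2 : f n ≤ 0) :
    ∃ k, 1 ≤ k ∧ k < n ∧ 0 < f k ∧ f (k + 1) ≤ 0 := by
  induction n with
  | zero => omega
  | succ m ih =>
    rcases eq_or_lt_of_le hn with h | h
    · exfalso; rw [← h] at h2; linarith
    · have hm : 1 ≤ m := by omega
      by_cases hf : 0 < f m
      · exact ⟨m, hm, by omega, hf, h2⟩
      · obtain ⟨k, hk1, hk2, hk3, hk4⟩ := ih hm (not_lt.mp hf)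
        exact ⟨k, hk1, by omega, hk3, hk4⟩


/-- Combination of Lemmas 4.1 and 4.2: if `l` is weakly decreasing with `l n ≤ -1`,
`l 1 ≥ -(n+1)` and gaps `l i - l (i+1) ≤ 2`, and `a` is weakly decreasing with
`l i - 1 ≤ a i ≤ l i`, then the sequence `γ = (n + 1 + a 1, n + a 2, …, 2 + a n, 1)`
has either a zero entry or two entries with equal absolute values. -/
theorem igr_odd_vanishing_core
    (n : ℕ) (hn : 1 ≤ n)
    (l a : ℕ → ℤ)
    (hl_dec : ∀ i, 1 ≤ i → i < n → l (i + 1) ≤ l i)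
    (h₁ : l n ≤ -1)
    (h₂ : -((n : ℤ) + 1) ≤ l 1)
    (h₃ : ∀ i, 1 ≤ i → i < n → l i - l (i + 1) ≤ 2)
    (ha_dec : ∀ i, 1 ≤ i → i < n → a (i + 1) ≤ a i)
    (ha : ∀ i, 1 ≤ i → i ≤ n → l i - 1 ≤ a i ∧ a i ≤ l i)
    (γ : ℕ → ℤ)
    (hγ₁ : ∀ i, 1 ≤ i → i ≤ n → γ i = ((n : ℤ) + 2 - (i : ℤ)) + a i)
    (hγ₂ : γ (n + 1) = 1) :
    (∃ i, 1 ≤ i ∧ i ≤ n + 1 ∧ γ i = 0) ∨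
      (∃ i j, 1 ≤ i ∧ i ≤ n + 1 ∧ 1 ≤ j ∧ j ≤ n + 1 ∧ i ≠ j ∧ |γ i| = |γ j|) := by
  by_cases hz : ∃ i, 1 ≤ i ∧ i ≤ n ∧ γ i = 0
  · obtain ⟨i, h1i, hin, hγi⟩ := hz
    exact Or.inl ⟨i, h1i, by omega, hγi⟩
  by_cases hone : ∃ i, 1 ≤ i ∧ i ≤ n ∧ |γ i| = 1
  · obtain ⟨i, h1i, hin, hγi⟩ := hone
    refine Or.inr ⟨i, n + 1, h1i, by omega, by omega, le_rfl, by omega, ?_⟩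
    rw [hγ₂, hγi]; norm_num
  -- now all γ i for i ∈ [1,n] satisfy |γ i| ≥ 2
  push_neg at hz hone
  have habs : ∀ i, 1 ≤ i → i ≤ n → 2 ≤ |γ i| := by
    intro i h1i hin
    have := hz i h1i hin
    have := hone i h1i hin
    rcases abs_nonneg (γ i) |>.lt_or_eq with h | h
    · rcases lt_or_ge (|γ i|) 2 with h' | h'
      · interval_cases h'' : |γ i| <;> simp_all [abs_eq_zero]
      · exact h'
    · exact absurd (abs_eq_zero.mp h.symm) (hz i h1i hin)
  have hγ1 : 0 < γ 1 := by
    have hla := ha 1 le_rfl hn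
    have := hγ₁ 1 le_rfl hn
    have h2' : 2 ≤ |γ 1| := habs 1 le_rfl hn
    have hlb : (-1 : ℤ) ≤ γ 1 := by
      rw [this]; push_cast; linarith [hla.1]
    rcases le_or_gt (γ 1) 0 with h | h
    · exfalso
      have : |γ 1| ≤ 1 := by rw [abs_of_nonpos h]; linarith
      linarith
    · exact h
  have hγn : γ n ≤ 0 := by
    have hla := ha n hn le_rfl
    have := hγ₁ n hn le_rfl
    have h2' : 2 ≤ |γ n| := habs n hn le_rfl
    have hub : γ n ≤ 1 := by
      rw [this]; push_cast; linarith [hla.2]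
    rcases le_or_gt (γ n) 0 with h | h
    · exact h
    · exfalso
      have : |γ n| ≤ 1 := by rw [abs_of_pos h]; linarith
      linarith
  obtain ⟨k, hk1, hkn, hkp, hkq⟩ := igr_ivt_aux γ n hn hγ1 hγn
  have hγk : 2 ≤ γ k := by
    have := habs k hk1 (by omega)
    rw [abs_of_pos hkp] at this; exact this
  have hγk1 : γ (k + 1) ≤ -2 := by
    have := habs (k + 1) (by omega) (by omega)
    rw [abs_of_nonpos hkq] at this; linarith
  -- gap bound
  have hgap : γ k - γ (k + 1) ≤ 4 := by
    have e1 := hγ₁ k hk1 (by omega)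
    have e2 := hγ₁ (k + 1) (by omega) (by omega)
    have b1 := (ha k hk1 (by omega)).2
    have b2 := (ha (k + 1) (by omega) (by omega)).1
    have b3 := h₃ k hk1 hkn
    rw [e1, e2]; push_cast; linarith
  have hk2 : γ k = 2 := by linarith
  have hk12 : γ (k + 1) = -2 := by linarith
  refine Or.inr ⟨k, k + 1, hk1, by omega, by omega, by omega, by omega, ?_⟩
  rw [hk2, hk12]; norm_num
end

section
/- Let (A, m) be a commutative local ring, let f ∈ m be a non-zero-divisor of A, let r ≥ 1 be an integer, let M and M' be free A-modules of rank r, and let φ : M → M' be an injective A-linear map whose cokernel M'/φ(M) is isomorphic as an A-module to A/(f). Then there exist bases (e_1, …, e_r) of M and (e'_1, …, e'_r) of M' such that φ(e_1) = f·e'_1 and φ(e_i) = e'_i for all i = 2, …, r. -/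
/-!
The cokernel map `ψ : M' → A/(f)` lifts to a linear form `ℓ` on `M'`; since `f ∈ m`, some value
of `ℓ` on a basis vector is a unit, and an elementary change of basis turns `ℓ` into the first
coordinate function of a basis `e'` of `M'`. Then `range φ = ker ψ` is spanned by
`f • e'₁, e'₂, …, e'ᵣ`, so their preimages under the injective map `φ` span `M`; a spanning family
of `r` vectors in a free module of rank `r` over a commutative ring is a basis.
-/

open Module Submodule

namespace Module.Basis

variable {ι R M : Type*} [CommRing R] [AddCommGroup M] [Module R M]

theorem exists_eq_of_top_le_span [Nontrivial R] [Fintype ι] (b : Basis ι R M) {v : ι → M}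
    (hv : ⊤ ≤ span R (Set.range v)) : ∃ c : Basis ι R M, ⇑c = v :=
  ⟨basisOfTopLeSpanOfCardEqFinrank v hv (finrank_eq_card_basis b).symm,
    coe_basisOfTopLeSpanOfCardEqFinrank v hv _⟩

theorem coord_eq_iff [DecidableEq ι] {c : Basis ι R M} {i : ι} {ℓ : Dual R M} :
    c.coord i = ℓ ↔ ∀ j, ℓ (c j) = if j = i then 1 else 0 := by
  refine ⟨fun h j => ?_, fun h => c.ext fun j => ?_⟩
  · simp [← h, Finsupp.single_apply]
  · simp [h, Finsupp.single_apply, eq_comm]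

theorem exists_coord_eq_of_isUnit [Nontrivial R] [Fintype ι] [DecidableEq ι] (b : Basis ι R M)
    (ℓ : Dual R M) {i : ι} (hi : IsUnit (ℓ (b i))) : ∃ c : Basis ι R M, c.coord i = ℓ := by
  obtain ⟨u, hu⟩ := hi
  set x := (↑u⁻¹ : R) • b i
  have hx : ℓ x = 1 := by simp [x, ← hu]
  let v : ι → M := fun j => if j = i then x else b j - ℓ (b j) • x
  have hb : ∀ j, b j ∈ span R (Set.range v) := by
    intro j
    have hvi : x ∈ span R (Set.range v) := subset_span ⟨i, if_pos rfl⟩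
    by_cases hj : j = i
    · subst hj
      have : b j = (u : R) • x := by simp [x, smul_smul]
      exact this ▸ smul_mem _ _ hvi
    · have : b j = v j + ℓ (b j) • x := by simp [v, hj]
      exact this ▸ add_mem (subset_span ⟨j, rfl⟩) (smul_mem _ _ hvi)
  obtain ⟨c, hc⟩ := b.exists_eq_of_top_le_span (v := v) (by
    rw [← b.span_eq, span_le]; rintro _ ⟨j, rfl⟩; exact hb j)
  refine ⟨c, coord_eq_iff.mpr fun j => ?_⟩
  by_cases hj : j = i <;> simp [hc, v, hj, hx]

theorem span_range_update_smul [DecidableEq ι] (c : Basis ι R M) (i : ι) (a : R) :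
    span R (Set.range (Function.update c i (a • c i))) =
      Submodule.comap (c.coord i) (Ideal.span {a}) := by
  apply le_antisymm
  · rw [span_le]
    rintro _ ⟨j, rfl⟩
    by_cases hj : j = i
    · subst hj
      simp
    · simp [hj]
  · intro x hx
    obtain ⟨s, hs⟩ := Ideal.mem_span_singleton'.mp hx
    have hrest : x - c.repr x i • c i ∈ span R (c '' {i}ᶜ) := by
      rw [c.mem_span_image]
      rintro j hj rfl
      simp at hj
    have hle : span R (c '' {i}ᶜ) ≤ span R (Set.range (Function.update c i (a • c i))) := by
      rw [span_le]
      rintro _ ⟨j, hj, rfl⟩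
      exact subset_span ⟨j, Function.update_of_ne hj _ _⟩
    have hsplit : x = (x - c.repr x i • c i) + s • Function.update c i (a • c i) i := by
      rw [Function.update_self, smul_smul, hs, coord_apply, sub_add_cancel]
    rw [hsplit]
    exact add_mem (hle hrest) (smul_mem _ _ (subset_span ⟨i, rfl⟩))

end Module.Basis

theorem exists_basis_apply_eq_of_range_eq_span {ι R M N : Type*} [CommRing R] [Nontrivial R]
    [Fintype ι] [AddCommGroup M] [Module R M] [AddCommGroup N] [Module R N]
    {φ : M →ₗ[R] N} (hφ : Function.Injective φ) (b : Basis ι R M) {w : ι → N}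
    (hw : LinearMap.range φ = span R (Set.range w)) : ∃ e : Basis ι R M, ∀ j, φ (e j) = w j := by
  have hmem : ∀ j, w j ∈ LinearMap.range φ := fun j => hw ▸ subset_span ⟨j, rfl⟩
  choose v hv using hmem
  have hspan : span R (Set.range v) = ⊤ := by
    apply map_injective_of_injective hφ
    rw [map_span, ← Set.range_comp, Submodule.map_top, hw]
    exact congrArg _ (congrArg Set.range (funext hv))
  obtain ⟨e, rfl⟩ := b.exists_eq_of_top_le_span hspan.ge
  exact ⟨e, hv⟩

namespace IsLocalRing

variable {ι R M : Type*} [CommRing R] [IsLocalRing R] [AddCommGroup M] [Module R M]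

theorem exists_isUnit_apply_basis (ℓ : Dual R M) (b : Basis ι R M) (h : ∃ x, IsUnit (ℓ x)) :
    ∃ i, IsUnit (ℓ (b i)) := by
  by_contra! hb
  obtain ⟨x, hx⟩ := h
  have hle : LinearMap.range ℓ ≤ maximalIdeal R := by
    rw [LinearMap.range_eq_map, ← b.span_eq, map_span, span_le]
    rintro _ ⟨_, ⟨i, rfl⟩, rfl⟩
    exact hb i
  exact hle ⟨x, rfl⟩ hx

theorem exists_basis_coord_eq [Fintype ι] [DecidableEq ι] (ℓ : Dual R M) (b : Basis ι R M)
    (h : ∃ x, IsUnit (ℓ x)) (i : ι) : ∃ c : Basis ι R M, c.coord i = ℓ := by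
  obtain ⟨j, hj⟩ := exists_isUnit_apply_basis ℓ b h
  refine (b.reindex (Equiv.swap i j)).exists_coord_eq_of_isUnit ℓ ?_
  simpa using hj

theorem exists_basis_mkQ_comp_coord_eq [Fintype ι] [DecidableEq ι] {I : Ideal R}
    (hI : I ≤ maximalIdeal R) (ψ : M →ₗ[R] R ⧸ I) (hψ : Function.Surjective ψ)
    (b : Basis ι R M) (i : ι) : ∃ c : Basis ι R M, I.mkQ ∘ₗ c.coord i = ψ := by
  have := Projective.of_basis b
  obtain ⟨ℓ, rfl⟩ := projective_lifting_property I.mkQ ψ I.mkQ_surjective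
  obtain ⟨x, hx⟩ := hψ 1
  have hℓx : IsUnit (ℓ x) := by
    refine isUnit_of_mem_nonunits_one_sub_self _ (hI ?_)
    rw [← Ideal.Quotient.eq, map_one]
    exact hx.symm
  obtain ⟨c, hc⟩ := exists_basis_coord_eq ℓ b ⟨x, hℓx⟩ i
  exact ⟨c, hc ▸ rfl⟩

end IsLocalRing

theorem local_ring_normal_form_general
    (A : Type*) [CommRing A] [IsLocalRing A]
    (f : A) (hf : f ∈ IsLocalRing.maximalIdeal A)
    (r : ℕ) (hr : 0 < r)
    (M M' : Type*) [AddCommGroup M] [Module A M] [AddCommGroup M'] [Module A M']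
    (bM : Module.Basis (Fin r) A M) (bM' : Module.Basis (Fin r) A M')
    (φ : M →ₗ[A] M') (hφ : Function.Injective φ)
    (hcoker : Nonempty ((M' ⧸ LinearMap.range φ) ≃ₗ[A] (A ⧸ Ideal.span {f}))) :
    ∃ (e : Module.Basis (Fin r) A M) (e' : Module.Basis (Fin r) A M'),
      φ (e ⟨0, hr⟩) = f • e' ⟨0, hr⟩ ∧
      ∀ i : Fin r, i ≠ ⟨0, hr⟩ → φ (e i) = e' i := by
  obtain ⟨σ⟩ := hcoker
  set ψ := σ.toLinearMap ∘ₗ (LinearMap.range φ).mkQ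
  have hψ : LinearMap.ker ψ = LinearMap.range φ := by
    rw [LinearMap.ker_comp, LinearEquiv.ker, comap_bot, ker_mkQ]
  have hfm : Ideal.span {f} ≤ IsLocalRing.maximalIdeal A :=
    (Ideal.span_singleton_le_iff_mem _).mpr hf
  obtain ⟨e', he'⟩ := IsLocalRing.exists_basis_mkQ_comp_coord_eq hfm ψ
    (σ.surjective.comp (LinearMap.range φ).mkQ_surjective) bM' ⟨0, hr⟩
  have hrange : LinearMap.range φ =
      span A (Set.range (Function.update e' ⟨0, hr⟩ (f • e' ⟨0, hr⟩))) := by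
    rw [e'.span_range_update_smul, ← hψ, ← he', LinearMap.ker_comp, ker_mkQ]
  obtain ⟨e, he⟩ := exists_basis_apply_eq_of_range_eq_span hφ bM hrange
  refine ⟨e, e', by simpa using he ⟨0, hr⟩, fun i hi => ?_⟩
  rw [he, Function.update_of_ne hi]

/-- Normal form over a local ring: if `φ : M → M'` is an injective map of free modules
of rank `r` over a local ring `A` whose cokernel is isomorphic to `A/(f)` for a
non-zero-divisor `f` in the maximal ideal, then there exist bases `e` of `M` and `e'`
of `M'` such that `φ (e 0) = f • e' 0` and `φ (e i) = e' i` for `i ≠ 0`. -/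
theorem local_ring_normal_form
    (A : Type*) [CommRing A] [IsLocalRing A]
    (f : A) (hf : f ∈ IsLocalRing.maximalIdeal A) (hfnzd : f ∈ nonZeroDivisors A)
    (r : ℕ) (hr : 0 < r)
    (M M' : Type*) [AddCommGroup M] [Module A M] [AddCommGroup M'] [Module A M']
    (bM : Module.Basis (Fin r) A M) (bM' : Module.Basis (Fin r) A M')
    (φ : M →ₗ[A] M') (hφ : Function.Injective φ)
    (hcoker : Nonempty ((M' ⧸ LinearMap.range φ) ≃ₗ[A] (A ⧸ Ideal.span {f}))) :
    ∃ (e : Module.Basis (Fin r) A M) (e' : Module.Basis (Fin r) A M'),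
      φ (e ⟨0, hr⟩) = f • e' ⟨0, hr⟩ ∧
      ∀ i : Fin r, i ≠ ⟨0, hr⟩ → φ (e i) = e' i :=
  local_ring_normal_form_general A f hf r hr M M' bM bM' φ hφ hcoker
end
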